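/- Let H = H1 ⊗ H' with dim H1 = 2 and H' = H2 ⊗ ... ⊗ Hn, and let {|a_{s,1}⟩ ⊗ |a'_s⟩ : s = 1,...,D} be an orthogonal product basis of H, where |a'_s⟩ ∈ H' is a product vector and D = dim H. Let E = {V_1,...,V_m} be a maximal subset of the set of lines {[a_{s,1}] : s} that does not contain any pair of mutually orthogonal lines. Then the vectors |a'_s⟩ for which [a_{s,1}] ∈ E form an orthonormal basis of H'. -/

import Mathlib

/-! Since `⟪a s ⊗ b s, a t ⊗ b t⟫ = ⟪a s, a t⟫ ⟪b s, b t⟫`, the vectors `b s` and `b t` are orthogonal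
whenever the lines `[a s]` and `[a t]` are not. No two lines in `E` are orthogonal, and, because in
`ℂ²` the orthogonal complement of a line is a line, no two lines outside `E` are orthogonal either
(their complements lie in `E`). So the `b s` with `[a s] ∈ E`, and those with `[a s] ∉ E`, are two
orthonormal families in the `d`-dimensional space `H'` with `2 d` members in total; each therefore
has exactly `d` members and the first is an orthonormal basis. -/

noncomputable def tensor2 {ι κ : Type*} [Fintype ι] [Fintype κ]
    (a : EuclideanSpace ℂ ι) (b : EuclideanSpace ℂ κ) :
    EuclideanSpace ℂ (ι × κ) :=
  WithLp.toLp 2 (fun p : ι × κ => a p.1 * b p.2)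

open Module Submodule

lemma inner_tensor2 {ι κ : Type*} [Fintype ι] [Fintype κ]
    (a a' : EuclideanSpace ℂ ι) (b b' : EuclideanSpace ℂ κ) :
    inner ℂ (tensor2 a b) (tensor2 a' b') = inner ℂ a a' * inner ℂ b b' := by
  simp only [tensor2, PiLp.inner_apply, RCLike.inner_apply, Finset.sum_mul_sum,
    Fintype.sum_prod_type, map_mul]
  refine Finset.sum_congr rfl fun i _ => Finset.sum_congr rfl fun j _ => ?_
  ring

lemma orthonormal_subtype_of_orthonormal_tensor2 {ι κ σ : Type*} [Fintype ι] [Fintype κ]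
    {a : σ → EuclideanSpace ℂ ι} {b : σ → EuclideanSpace ℂ κ}
    (h : Orthonormal ℂ fun s => tensor2 (a s) (b s)) (hb : ∀ s, ‖b s‖ = 1) (p : σ → Prop)
    (hp : ∀ s t, p s → p t → s ≠ t → inner ℂ (a s) (a t) ≠ 0) :
    Orthonormal ℂ fun s : {s // p s} => b s := by
  refine ⟨fun s => hb s, fun s t hst => ?_⟩
  have hprod : inner ℂ (tensor2 (a s) (b s)) (tensor2 (a t) (b t)) = 0 :=
    h.2 (Subtype.coe_ne_coe.mpr hst)
  rw [inner_tensor2] at hprod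
  exact (mul_eq_zero.mp hprod).resolve_left (hp s t s.2 t.2 (Subtype.coe_ne_coe.mpr hst))

section InnerProductSpace

variable {𝕜 E : Type*} [RCLike 𝕜] [NormedAddCommGroup E] [InnerProductSpace 𝕜 E]

lemma span_singleton_le_orthogonal_span_singleton_iff {x y : E} :
    (𝕜 ∙ x) ≤ (𝕜 ∙ y)ᗮ ↔ inner 𝕜 x y = 0 := by
  rw [span_singleton_le_iff_mem, mem_orthogonal_singleton_iff_inner_left]

lemma orthogonal_span_singleton_eq_of_finrank_eq_two (hE : finrank 𝕜 E = 2) {x y : E}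
    (hx : x ≠ 0) (hy : y ≠ 0) (hxy : inner 𝕜 x y = 0) :
    (𝕜 ∙ x)ᗮ = 𝕜 ∙ y := by
  have : FiniteDimensional 𝕜 E := Module.finite_of_finrank_eq_succ hE
  have hcompl := finrank_add_finrank_orthogonal (𝕜 ∙ x)
  rw [finrank_span_singleton hx, hE] at hcompl
  refine (eq_of_le_of_finrank_eq ?_ ?_).symm
  · exact span_singleton_le_orthogonal_span_singleton_iff.mpr (inner_eq_zero_symm.mp hxy)
  · rw [finrank_span_singleton hy]
    omega

lemma span_image_eq_top_of_orthonormal_of_orthonormal_compl [FiniteDimensional 𝕜 E]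
    {ι : Type*} [Fintype ι] {v : ι → E} (hcard : Fintype.card ι = 2 * finrank 𝕜 E)
    (p : ι → Prop) [DecidablePred p] (hp : Orthonormal 𝕜 fun i : {i // p i} => v i)
    (hnp : Orthonormal 𝕜 fun i : {i // ¬ p i} => v i) :
    span 𝕜 (v '' {i | p i}) = ⊤ := by
  have hle := hp.linearIndependent.fintype_card_le_finrank
  have hle' := hnp.linearIndependent.fintype_card_le_finrank
  have hsub := Fintype.card_subtype_le p
  rw [Fintype.card_subtype_compl] at hle'
  rw [Set.image_eq_range]
  exact hp.linearIndependent.span_eq_top_of_card_eq_finrank' (by omega)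

end InnerProductSpace

theorem stmt3_general (d : ℕ)
    (a : Fin (2 * d) → EuclideanSpace ℂ (Fin 2))
    (b : Fin (2 * d) → EuclideanSpace ℂ (Fin d))
    (ha : ∀ s, ‖a s‖ = 1) (hb : ∀ s, ‖b s‖ = 1)
    (honb : Orthonormal ℂ (fun s => tensor2 (a s) (b s)))
    (E : Set (Submodule ℂ (EuclideanSpace ℂ (Fin 2))))
    (hE_noorth : ∀ V ∈ E, ∀ W ∈ E, ¬ V ≤ Submodule.orthogonal W)
    (hE_max : ∀ s, (ℂ ∙ a s) ∉ E → Submodule.orthogonal (ℂ ∙ a s) ∈ E) :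
    Orthonormal ℂ (fun t : {s : Fin (2 * d) // (ℂ ∙ a s) ∈ E} => b t)
      ∧ Submodule.span ℂ (b '' {s | (ℂ ∙ a s) ∈ E}) = ⊤ := by
  classical
  have ha0 : ∀ s, a s ≠ 0 := fun s => norm_ne_zero_iff.mp (by simp [ha s])
  have hin : ∀ s t, (ℂ ∙ a s) ∈ E → (ℂ ∙ a t) ∈ E → s ≠ t → inner ℂ (a s) (a t) ≠ 0 :=
    fun s t hs ht _ h0 =>
      hE_noorth _ hs _ ht (span_singleton_le_orthogonal_span_singleton_iff.mpr h0)
  have hout : ∀ s t, (ℂ ∙ a s) ∉ E → (ℂ ∙ a t) ∉ E → s ≠ t → inner ℂ (a s) (a t) ≠ 0 := by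
    intro s t hs ht _ h0
    have hdim : finrank ℂ (EuclideanSpace ℂ (Fin 2)) = 2 := finrank_euclideanSpace_fin
    have hst := orthogonal_span_singleton_eq_of_finrank_eq_two hdim (ha0 s) (ha0 t) h0
    have hts := orthogonal_span_singleton_eq_of_finrank_eq_two hdim (ha0 t) (ha0 s)
      (inner_eq_zero_symm.mp h0)
    exact hE_noorth _ (hE_max s hs) _ (hE_max t ht) (by rw [hst, hts, hst])
  have hinE := orthonormal_subtype_of_orthonormal_tensor2 honb hb _ hin
  have houtE := orthonormal_subtype_of_orthonormal_tensor2 honb hb _ hout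
  refine ⟨hinE, span_image_eq_top_of_orthonormal_of_orthonormal_compl ?_ _ hinE houtE⟩
  rw [Fintype.card_fin, finrank_euclideanSpace_fin]

/-- Let `{a_s ⊗ b_s}` be an orthogonal product basis of `ℂ² ⊗ H'` (with `dim H' = d`), and let
`E` be a maximal set of lines among the `[a_s]` containing no pair of mutually orthogonal lines.
Then the vectors `b_s` for which `[a_s] ∈ E` form an orthonormal basis of `H'`. -/
theorem stmt3 (d : ℕ)
    (a : Fin (2 * d) → EuclideanSpace ℂ (Fin 2))
    (b : Fin (2 * d) → EuclideanSpace ℂ (Fin d))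
    (ha : ∀ s, ‖a s‖ = 1) (hb : ∀ s, ‖b s‖ = 1)
    (honb : Orthonormal ℂ (fun s => tensor2 (a s) (b s)))
    (hspan : Submodule.span ℂ (Set.range fun s => tensor2 (a s) (b s)) = ⊤)
    (E : Set (Submodule ℂ (EuclideanSpace ℂ (Fin 2))))
    (hE_sub : E ⊆ Set.range fun s => (ℂ ∙ a s))
    (hE_noorth : ∀ V ∈ E, ∀ W ∈ E, ¬ V ≤ Submodule.orthogonal W)
    (hE_max : ∀ s, (ℂ ∙ a s) ∉ E → Submodule.orthogonal (ℂ ∙ a s) ∈ E) :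
    Orthonormal ℂ (fun t : {s : Fin (2 * d) // (ℂ ∙ a s) ∈ E} => b t)
      ∧ Submodule.span ℂ (b '' {s | (ℂ ∙ a s) ∈ E}) = ⊤ :=
  stmt3_general d a b ha hb honb E hE_noorth hE_max
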